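/- Let Ω ⊆ ℝ tile ℝ by {0,…,p−1} and Ω₀ = Ω ∩ [0,p). Then the Fourier transform of the indicator function χ_{Ω₀} satisfies χ̂_{Ω₀}(k) = 1 if k = 0 and χ̂_{Ω₀}(k) = 0 for all nonzero integers k. -/

import Mathlib

open MeasureTheory Set Real
noncomputable section

/-- Translate of a set of reals by `t`. -/
def tr (t : ℝ) (A : Set ℝ) : Set ℝ := (fun x => x + t) '' A

/-- `Ω` tiles `ℝ` by translations by `{0, 1, …, p-1}`. -/
def TilesByFin (Ω : Set ℝ) (p : ℕ) : Prop :=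
  (∀ j j' : ℕ, j < p → j' < p → j ≠ j' →
      volume (tr (j : ℝ) Ω ∩ tr (j' : ℝ) Ω) = 0) ∧
  volume ((⋃ j ∈ Finset.range p, tr (j : ℝ) Ω)ᶜ) = 0

/-- `χ̂_E(t) = ∫_E e^{-2πitx} dx`. -/
def ftInd (E : Set ℝ) (t : ℝ) : ℂ :=
  ∫ x in E, Complex.exp ((-(2 * π * t * x) : ℝ) * Complex.I)

theorem stmt9 (p : ℕ) (hp : 2 ≤ p) (Ω : Set ℝ) (hΩ : MeasurableSet Ω)
    (htile : TilesByFin Ω p) (Ω₀ : Set ℝ) (hΩ₀ : Ω₀ = Ω ∩ Ico 0 (p : ℝ)) :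
    ∀ k : ℤ, ftInd Ω₀ (k : ℝ) = if k = 0 then 1 else 0 := by
  intro k
  obtain ⟨hdis, hcov⟩ := htile
  set c : ℂ := (-(2 * π * (k : ℝ)) : ℝ) * Complex.I with hc
  set e : ℝ → ℂ := fun x => Complex.exp (c * x) with he
  have he_cont : Continuous e :=
    Complex.continuous_exp.comp (continuous_const.mul Complex.continuous_ofReal)
  -- membership in translates
  have hmemtr : ∀ (j : ℕ) (y : ℝ), y ∈ tr (j : ℝ) Ω ↔ y - (j : ℝ) ∈ Ω := by
    intro j y
    constructor
    · rintro ⟨x, hx, rfl⟩; simpa using hx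
    · intro h; exact ⟨y - j, h, by ring⟩
  -- periodicity of e under integer+nat shifts
  have hper : ∀ (m : ℕ) (x : ℝ), e (x + (m : ℝ)) = e x := by
    intro m x
    have h1 : c * ((x + (m : ℝ) : ℝ) : ℂ) = c * x + ((-(k * m) : ℤ) : ℂ) * (2 * π * Complex.I) := by
      rw [hc]; push_cast; ring
    rw [he]
    simp only
    rw [h1, Complex.exp_add, Complex.exp_int_mul_two_pi_mul_I, mul_one]
  -- the sets A m = {x | x + m ∈ Ω}
  set A : ℕ → Set ℝ := fun m => (fun x : ℝ => x + (m : ℝ)) ⁻¹' Ω with hA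
  have hAmeas : ∀ m, MeasurableSet (A m) := fun m =>
    hΩ.preimage (measurable_add_const _)
  -- a.e. count lemma
  have hae : ∀ᵐ x : ℝ, (∑ m ∈ Finset.range p, (A m).indicator (fun _ => (1 : ℝ)) x) = 1 := by
    -- first, the analogous statement for translates of Ω
    have hcov' : ∀ᵐ y : ℝ, y ∈ ⋃ j ∈ Finset.range p, tr (j : ℝ) Ω := mem_ae_iff.mpr hcov
    have hpair : ∀ᵐ y : ℝ, ∀ j j' : ℕ, j < p → j' < p → j ≠ j' →
        ¬(y ∈ tr (j : ℝ) Ω ∧ y ∈ tr (j' : ℝ) Ω) := by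
      rw [ae_all_iff]
      intro j
      rw [ae_all_iff]
      intro j'
      by_cases h : j < p ∧ j' < p ∧ j ≠ j'
      · have h0 := measure_eq_zero_iff_ae_notMem.mp (hdis j j' h.1 h.2.1 h.2.2)
        filter_upwards [h0] with y hy _ _ _ hmem
        exact hy ⟨hmem.1, hmem.2⟩
      · filter_upwards with y hj hj' hne _
        exact h ⟨hj, hj', hne⟩
    have h1 : ∀ᵐ y : ℝ,
        (∑ j ∈ Finset.range p, (tr (j : ℝ) Ω).indicator (fun _ => (1 : ℝ)) y) = 1 := by
      filter_upwards [hcov', hpair] with y hy hp'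
      simp only [Set.mem_iUnion, Finset.mem_range] at hy
      obtain ⟨j₀, hj₀, hyj₀⟩ := hy
      rw [Finset.sum_eq_single_of_mem j₀ (Finset.mem_range.mpr hj₀)]
      · simp [Set.indicator_of_mem hyj₀]
      · intro j hj hne
        have : y ∉ tr (j : ℝ) Ω := fun hmem =>
          hp' j j₀ (Finset.mem_range.mp hj) hj₀ hne ⟨hmem, hyj₀⟩
        simp [Set.indicator_of_notMem this]
    -- transfer via translation by p-1 and reindexing
    have hkey : ∀ x : ℝ,
        (∑ m ∈ Finset.range p, (A m).indicator (fun _ => (1 : ℝ)) x)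
          = ∑ j ∈ Finset.range p,
              (tr (j : ℝ) Ω).indicator (fun _ => (1 : ℝ)) (x + ((p - 1 : ℕ) : ℝ)) := by
      intro x
      refine Finset.sum_nbij' (fun m => p - 1 - m) (fun j => p - 1 - j) ?_ ?_ ?_ ?_ ?_
      · intro m hm
        exact Finset.mem_range.mpr (lt_of_le_of_lt (Nat.sub_le _ _) (by omega))
      · intro j hj
        exact Finset.mem_range.mpr (lt_of_le_of_lt (Nat.sub_le _ _) (by omega))
      · intro m hm
        have := Finset.mem_range.mp hm
        show p - 1 - (p - 1 - m) = m
        omega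
      · intro j hj
        have := Finset.mem_range.mp hj
        show p - 1 - (p - 1 - j) = j
        omega
      · intro m hm
        have hmp := Finset.mem_range.mp hm
        have hmem : x ∈ A m ↔ x + ((p - 1 : ℕ) : ℝ) ∈ tr ((p - 1 - m : ℕ) : ℝ) Ω := by
          rw [hmemtr]
          have hcast : ((p - 1 - m : ℕ) : ℝ) = ((p - 1 : ℕ) : ℝ) - (m : ℝ) := by
            have : m ≤ p - 1 := by omega
            push_cast [Nat.cast_sub this]; ring
          rw [hcast]
          have : x + ((p - 1 : ℕ) : ℝ) - (((p - 1 : ℕ) : ℝ) - (m : ℝ)) = x + m := by ring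
          rw [this]
          rfl
        by_cases hx : x ∈ A m
        · rw [Set.indicator_of_mem hx, Set.indicator_of_mem (hmem.mp hx)]
        · rw [Set.indicator_of_notMem hx, Set.indicator_of_notMem (fun hmm => hx (hmem.mpr hmm))]
    -- use quasi-measure-preservation of translation
    set N : Set ℝ := {y : ℝ |
      ¬ (∑ j ∈ Finset.range p, (tr (j : ℝ) Ω).indicator (fun _ => (1 : ℝ)) y) = 1} with hN
    have hNnull : volume N = 0 := by
      rw [← ae_iff] at *
      exact h1
    have hprenull : volume ((fun x : ℝ => x + ((p - 1 : ℕ) : ℝ)) ⁻¹' N) = 0 :=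
      (measurePreserving_add_right volume ((p - 1 : ℕ) : ℝ)).quasiMeasurePreserving.preimage_null
        hNnull
    rw [ae_iff]
    refine measure_mono_null ?_ hprenull
    intro x hx
    simp only [Set.mem_setOf_eq] at hx
    simp only [Set.mem_preimage, hN, Set.mem_setOf_eq]
    rw [← hkey x]
    exact hx
  -- decomposition of Ω₀
  set S : ℕ → Set ℝ := fun m => Ω ∩ Ico (m : ℝ) ((m : ℝ) + 1) with hS
  have hSmeas : ∀ m, MeasurableSet (S m) := fun m => hΩ.inter measurableSet_Ico
  have hΩ₀U : Ω₀ = ⋃ m ∈ Finset.range p, S m := by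
    rw [hΩ₀]
    ext x
    simp only [Set.mem_inter_iff, Set.mem_Ico, Set.mem_iUnion, Finset.mem_range, hS]
    constructor
    · rintro ⟨hxΩ, hx0, hxp⟩
      refine ⟨⌊x⌋₊, ?_, hxΩ, Nat.floor_le hx0, Nat.lt_floor_add_one x⟩
      exact (Nat.floor_lt hx0).mpr hxp
    · rintro ⟨m, hm, hxΩ, h1, h2⟩
      refine ⟨hxΩ, le_trans (by positivity) h1, lt_of_lt_of_le h2 ?_⟩
      have : (m : ℝ) + 1 = ((m + 1 : ℕ) : ℝ) := by push_cast; ring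
      rw [this]
      exact_mod_cast Nat.succ_le_of_lt hm
  have hSdisj : (↑(Finset.range p) : Set ℕ).Pairwise (Function.onFun Disjoint S) := by
    intro m _ m' _ hne
    refine Set.disjoint_left.mpr fun x hx hx' => hne ?_
    have h1 : ⌊x⌋₊ = m := (Nat.floor_eq_iff (le_trans (by positivity) hx.2.1)).mpr ⟨hx.2.1, hx.2.2⟩
    have h2 : ⌊x⌋₊ = m' := (Nat.floor_eq_iff (le_trans (by positivity) hx'.2.1)).mpr ⟨hx'.2.1, hx'.2.2⟩
    omega
  have hSint : ∀ m : ℕ, IntegrableOn e (S m) := fun m =>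
    (he_cont.integrableOn_Icc (a := (m : ℝ)) (b := (m : ℝ) + 1)).mono_set
      (Set.Subset.trans Set.inter_subset_right Set.Ico_subset_Icc_self)
  -- T m
  set T : ℕ → Set ℝ := fun m => Ico (0 : ℝ) 1 ∩ A m with hT
  have hTmeas : ∀ m, MeasurableSet (T m) := fun m => measurableSet_Ico.inter (hAmeas m)
  have hTint : ∀ m : ℕ, IntegrableOn e (T m) := fun m =>
    (he_cont.integrableOn_Icc (a := (0 : ℝ)) (b := (1 : ℝ))).mono_set
      (Set.Subset.trans Set.inter_subset_left Set.Ico_subset_Icc_self)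
  -- translation step : ∫_{S m} e = ∫_{T m} e   (for m < p)
  have htrans : ∀ m : ℕ, m < p → ∫ x in S m, e x = ∫ x in T m, e x := by
    intro m hm
    have hpre : (fun x : ℝ => x + (m : ℝ)) ⁻¹' (S m) = T m := by
      ext x
      simp only [Set.mem_preimage, hS, hT, Set.mem_inter_iff, Set.mem_Ico, hA]
      constructor
      · rintro ⟨h1, h2, h3⟩
        exact ⟨⟨by linarith, by linarith⟩, h1⟩
      · rintro ⟨⟨h2, h3⟩, h1⟩
        exact ⟨h1, by linarith, by linarith⟩
    calc ∫ x in S m, e x = ∫ x, (S m).indicator e x := (integral_indicator (hSmeas m)).symm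
      _ = ∫ x, (S m).indicator e (x + (m : ℝ)) :=
          (integral_add_right_eq_self ((S m).indicator e) (m : ℝ)).symm
      _ = ∫ x, (T m).indicator e x := by
          congr 1
          funext x
          by_cases hx : x ∈ T m
          · have hx' : x + (m : ℝ) ∈ S m := by rw [← hpre] at hx; exact hx
            rw [Set.indicator_of_mem hx' , Set.indicator_of_mem hx, hper]
          · have hx' : x + (m : ℝ) ∉ S m := fun hmm => hx (by rw [← hpre]; exact hmm)
            rw [Set.indicator_of_notMem hx', Set.indicator_of_notMem hx]
      _ = ∫ x in T m, e x := integral_indicator (hTmeas m)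
  -- summation step
  have hsum : ∑ m ∈ Finset.range p, ∫ x in T m, e x = ∫ x in Ico (0 : ℝ) 1, e x := by
    have hint : ∀ m ∈ Finset.range p, Integrable ((T m).indicator e) :=
      fun m _ => (integrable_indicator_iff (hTmeas m)).mpr (hTint m)
    calc ∑ m ∈ Finset.range p, ∫ x in T m, e x
        = ∑ m ∈ Finset.range p, ∫ x, (T m).indicator e x := by
          refine Finset.sum_congr rfl fun m _ => ?_
          rw [integral_indicator (hTmeas m)]
      _ = ∫ x, ∑ m ∈ Finset.range p, (T m).indicator e x :=
          (integral_finset_sum _ hint).symm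
      _ = ∫ x, (Ico (0 : ℝ) 1).indicator e x := by
          refine integral_congr_ae ?_
          filter_upwards [hae] with x hx
          by_cases h01 : x ∈ Ico (0 : ℝ) 1
          · have hterm : ∀ m : ℕ, (T m).indicator e x
                = ((A m).indicator (fun _ => (1 : ℝ)) x) • e x := by
              intro m
              by_cases hm : x ∈ A m
              · rw [Set.indicator_of_mem (Set.mem_inter h01 hm), Set.indicator_of_mem hm, one_smul]
              · rw [Set.indicator_of_notMem (fun hmm => hm hmm.2),
                  Set.indicator_of_notMem hm, zero_smul]
            rw [Finset.sum_congr rfl (fun m _ => hterm m), ← Finset.sum_smul, hx, one_smul,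
              Set.indicator_of_mem h01]
          · have hterm : ∀ m : ℕ, (T m).indicator e x = 0 := fun m =>
              Set.indicator_of_notMem (fun hmm => h01 hmm.1) _
            rw [Finset.sum_congr rfl (fun m _ => hterm m), Set.indicator_of_notMem h01]
            simp
      _ = ∫ x in Ico (0 : ℝ) 1, e x := integral_indicator measurableSet_Ico
  -- the basic integral
  have hbasic : ∫ x in Ico (0 : ℝ) 1, e x = if k = 0 then 1 else 0 := by
    by_cases hk : k = 0
    · have hc0 : c = 0 := by rw [hc, hk]; simp
      simp only [hk, if_pos rfl, he, hc0, zero_mul, Complex.exp_zero]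
      rw [setIntegral_const]
      rw [Real.volume_real_Ico]
      norm_num
    · have hcne : c ≠ 0 := by
        rw [hc]
        refine mul_ne_zero ?_ Complex.I_ne_zero
        rw [Complex.ofReal_ne_zero]
        have hkne : (k : ℝ) ≠ 0 := Int.cast_ne_zero.mpr hk
        exact neg_ne_zero.mpr (mul_ne_zero (mul_ne_zero two_ne_zero Real.pi_ne_zero) hkne)
      rw [Measure.restrict_congr_set Ico_ae_eq_Ioc,
        ← intervalIntegral.integral_of_le (zero_le_one)]
      rw [he]
      simp only
      rw [integral_exp_mul_complex hcne]
      have h1 : c * ((1 : ℝ) : ℂ) = ((-k : ℤ) : ℂ) * (2 * π * Complex.I) := by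
        rw [hc]; push_cast; ring
      have h0 : c * ((0 : ℝ) : ℂ) = 0 := by push_cast; ring
      rw [h1, h0, Complex.exp_int_mul_two_pi_mul_I, Complex.exp_zero, sub_self, zero_div,
        if_neg hk]
  -- assemble
  have hstart : ftInd Ω₀ (k : ℝ) = ∫ x in Ω₀, e x := by
    unfold ftInd
    refine integral_congr_ae (Filter.Eventually.of_forall fun x => ?_)
    rw [he]
    simp only
    congr 1
    rw [hc]
    push_cast
    ring
  rw [hstart, hΩ₀U,
    integral_biUnion_finset (Finset.range p) (fun m _ => hSmeas m) hSdisj (fun m _ => hSint m)]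
  rw [Finset.sum_congr rfl (fun m hm => htrans m (Finset.mem_range.mp hm))]
  rw [hsum]
  exact hbasic
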